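/- arXiv:1310.1950 — 5 statements merged into one kernel-verified Lean document; each statement's English description precedes it below -/
import Mathlib

section
/- Let X be a Banach space, L a compact Hausdorff space, and R : X → C(L) a bounded operator. If μ is a finite signed regular Borel measure on L with μ(L) = 0, then ‖R*(μ)‖ ≤ (1/2) · diam(φ^R[supp μ]) · ‖μ‖, where ‖μ‖ is the total variation norm, φ^R(p) = R*(δ_p), and diam is the norm-diameter in X*. -/
open MeasureTheory Set

/-- The support of a (nonnegative) measure: points all of whose neighborhoods
have nonzero measure. -/
def msupport {α : Type*} [TopologicalSpace α] [MeasurableSpace α]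
    (μ : Measure α) : Set α :=
  {x | ∀ U ∈ nhds x, μ U ≠ 0}

/-- `φ^R p = R^*(δ_p)`, the functional `x ↦ (R x)(p)`. -/
noncomputable def phiR {X L : Type*} [NormedAddCommGroup X] [NormedSpace ℝ X]
    [TopologicalSpace L] [CompactSpace L]
    (R : X →L[ℝ] C(L, ℝ)) (p : L) : StrongDual ℝ X :=
  (ContinuousMap.evalCLM ℝ p).comp R

/-!
Since `μ L = 0`, the positive and negative parts `P`, `N` of `μ` have equal mass, so
`ψ x = ∫ (R x - c) dP - ∫ (R x - c) dN` for every constant `c`. Both parts live on `supp μ`, where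
`R x p - R x q = (φ^R p - φ^R q) x` is at most `diam (φ^R [supp μ]) * ‖x‖`; choosing `c` as the
midpoint of the range of `R x` on `supp μ` bounds both integrands by half of that.
-/

lemma msupport_eq_support {α : Type*} [TopologicalSpace α] [MeasurableSpace α]
    (μ : Measure α) : msupport μ = μ.support := by
  ext x
  simp [msupport, Measure.mem_support_iff_forall, pos_iff_ne_zero]

lemma exists_abs_sub_le_half_of_sub_le {α : Type*} {s : Set α} {f : α → ℝ} {D : ℝ}
    (h : ∀ p ∈ s, ∀ q ∈ s, f p - f q ≤ D) : ∃ c, ∀ p ∈ s, |f p - c| ≤ D / 2 := by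
  rcases s.eq_empty_or_nonempty with rfl | ⟨q₀, hq₀⟩
  · exact ⟨0, by simp⟩
  have hne : (f '' s).Nonempty := ⟨f q₀, mem_image_of_mem f hq₀⟩
  have hbddAbove : BddAbove (f '' s) :=
    ⟨f q₀ + D, forall_mem_image.2 fun p hp => by linarith [h p hp q₀ hq₀]⟩
  have hbddBelow : BddBelow (f '' s) :=
    ⟨f q₀ - D, forall_mem_image.2 fun p hp => by linarith [h q₀ hq₀ p hp]⟩
  have hmem : ∀ p ∈ s, sInf (f '' s) ≤ f p ∧ f p ≤ sSup (f '' s) := fun p hp =>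
    ⟨csInf_le hbddBelow (mem_image_of_mem f hp), le_csSup hbddAbove (mem_image_of_mem f hp)⟩
  have hosc : sSup (f '' s) - D ≤ sInf (f '' s) :=
    le_csInf hne <| forall_mem_image.2 fun q hq => by
      have : sSup (f '' s) ≤ f q + D :=
        csSup_le hne <| forall_mem_image.2 fun p hp => by linarith [h p hp q hq]
      linarith
  refine ⟨(sSup (f '' s) + sInf (f '' s)) / 2, fun p hp => abs_le.2 ⟨?_, ?_⟩⟩ <;>
    linarith [hmem p hp]

lemma norm_integral_sub_integral_le {α : Type*} [MeasurableSpace α] {P N : Measure α}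
    [IsFiniteMeasure P] [IsFiniteMeasure N] {f : α → ℝ} (hfP : Integrable f P)
    (hfN : Integrable f N) (hmass : P.real univ = N.real univ) {c r : ℝ}
    (hP : ∀ᵐ a ∂P, ‖f a - c‖ ≤ r) (hN : ∀ᵐ a ∂N, ‖f a - c‖ ≤ r) :
    ‖∫ a, f a ∂P - ∫ a, f a ∂N‖ ≤ r * (P.real univ + N.real univ) := by
  have hcentered : ∫ a, f a ∂P - ∫ a, f a ∂N = ∫ a, (f a - c) ∂P - ∫ a, (f a - c) ∂N := by
    rw [integral_sub hfP (integrable_const c), integral_sub hfN (integrable_const c),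
      integral_const, integral_const, hmass]
    ring
  calc ‖∫ a, f a ∂P - ∫ a, f a ∂N‖
      ≤ ‖∫ a, (f a - c) ∂P‖ + ‖∫ a, (f a - c) ∂N‖ := hcentered ▸ norm_sub_le _ _
    _ ≤ r * P.real univ + r * N.real univ :=
      add_le_add (norm_integral_le_of_norm_le_const hP) (norm_integral_le_of_norm_le_const hN)
    _ = r * (P.real univ + N.real univ) := by ring

section phiR

variable {X L : Type*} [NormedAddCommGroup X] [NormedSpace ℝ X]
  [TopologicalSpace L] [CompactSpace L] (R : X →L[ℝ] C(L, ℝ))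

lemma norm_phiR_le (p : L) : ‖phiR R p‖ ≤ ‖R‖ :=
  ContinuousLinearMap.opNorm_le_bound _ (norm_nonneg R) fun x =>
    ((R x).norm_coe_le_norm p).trans (R.le_opNorm x)

lemma isBounded_image_phiR (s : Set L) : Bornology.IsBounded (phiR R '' s) :=
  (Metric.isBounded_closedBall (x := 0) (r := ‖R‖)).subset <| by
    rintro - ⟨p, -, rfl⟩
    simpa using norm_phiR_le R p

lemma sub_le_diam_image_phiR_mul_norm {s : Set L} {p q : L} (hp : p ∈ s) (hq : q ∈ s)
    (x : X) : R x p - R x q ≤ Metric.diam (phiR R '' s) * ‖x‖ :=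
  calc R x p - R x q = (phiR R p - phiR R q) x := rfl
    _ ≤ ‖phiR R p - phiR R q‖ * ‖x‖ := (le_abs_self _).trans ((phiR R p - phiR R q).le_opNorm x)
    _ ≤ Metric.diam (phiR R '' s) * ‖x‖ := by
      gcongr
      rw [← dist_eq_norm]
      exact Metric.dist_le_diam_of_mem (isBounded_image_phiR R s) (mem_image_of_mem _ hp)
        (mem_image_of_mem _ hq)

end phiR

theorem stmt1_general {X L : Type*} [NormedAddCommGroup X] [NormedSpace ℝ X]
    [TopologicalSpace L] [CompactSpace L]
    [MeasurableSpace L] [BorelSpace L]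
    (R : X →L[ℝ] C(L, ℝ))
    (μ : SignedMeasure L) (hreg : μ.totalVariation.Regular)
    (hμL : μ Set.univ = 0)
    (ψ : StrongDual ℝ X)
    (hψ : ∀ x : X, ψ x = ∫ p, R x p ∂μ.toJordanDecomposition.posPart
      - ∫ p, R x p ∂μ.toJordanDecomposition.negPart) :
    ‖ψ‖ ≤ (1 / 2) * Metric.diam (phiR R '' msupport μ.totalVariation)
      * (μ.totalVariation Set.univ).toReal := by
  set P := μ.toJordanDecomposition.posPart
  set N := μ.toJordanDecomposition.negPart
  have hS : msupport μ.totalVariation ∈ ae μ.totalVariation :=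
    msupport_eq_support μ.totalVariation ▸ Measure.support_mem_ae_of_regular
  set S := msupport μ.totalVariation
  have hSP : S ∈ ae P := ae_mono (Measure.le_add_right le_rfl) hS
  have hSN : S ∈ ae N := ae_mono (Measure.le_add_left le_rfl) hS
  have hmass : P.real univ = N.real univ := by
    linarith [μ.apply_eq_posPart_real_sub_negPart_real MeasurableSet.univ]
  have htv : (μ.totalVariation univ).toReal = P.real univ + N.real univ :=
    measureReal_add_apply (μ₁ := P) (μ₂ := N)
  have hint : ∀ (ν : Measure L) [IsFiniteMeasure ν] (x : X), Integrable (R x) ν :=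
    fun ν _ x => (R x).continuous.integrable_of_hasCompactSupport
      (HasCompactSupport.of_compactSpace _)
  refine ψ.opNorm_le_bound (mul_nonneg (mul_nonneg (by norm_num) Metric.diam_nonneg)
    ENNReal.toReal_nonneg) fun x => ?_
  obtain ⟨c, hc⟩ := exists_abs_sub_le_half_of_sub_le fun p hp q hq =>
    sub_le_diam_image_phiR_mul_norm R hp hq x
  calc ‖ψ x‖ = ‖∫ p, R x p ∂P - ∫ p, R x p ∂N‖ := by rw [hψ x]
    _ ≤ Metric.diam (phiR R '' S) * ‖x‖ / 2 * (P.real univ + N.real univ) :=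
      norm_integral_sub_integral_le (hint P x) (hint N x) hmass (Filter.mem_of_superset hSP hc)
        (Filter.mem_of_superset hSN hc)
    _ = 1 / 2 * Metric.diam (phiR R '' S) * (μ.totalVariation univ).toReal * ‖x‖ := by
      rw [htv]; ring

theorem stmt1 {X L : Type*} [NormedAddCommGroup X] [NormedSpace ℝ X] [CompleteSpace X]
    [TopologicalSpace L] [CompactSpace L] [T2Space L]
    [MeasurableSpace L] [BorelSpace L]
    (R : X →L[ℝ] C(L, ℝ))
    (μ : SignedMeasure L) (hreg : μ.totalVariation.Regular)
    (hμL : μ Set.univ = 0)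
    (ψ : StrongDual ℝ X)
    (hψ : ∀ x : X, ψ x = ∫ p, R x p ∂μ.toJordanDecomposition.posPart
      - ∫ p, R x p ∂μ.toJordanDecomposition.negPart) :
    ‖ψ‖ ≤ (1 / 2) * Metric.diam (phiR R '' msupport μ.totalVariation)
      * (μ.totalVariation Set.univ).toReal :=
  stmt1_general R μ hreg hμL ψ hψ
end

section
/- Let I be a compact line (a linearly ordered set compact in its order topology) and H a nonempty closed subset of I. For every finite signed regular Borel measure μ on I there exists a finite signed regular Borel measure ν on I such that: (A) supp ν ⊆ H; (B) ν(I) = μ(I); (C) ‖ν‖ ≤ ‖μ‖ (total variation norms); (D) ν([min I, t]) = μ([min I, t]) for every t ∈ H with t ≠ max H. -/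
open MeasureTheory Set

namespace MeasureTheory.Measure

variable {α β : Type*} [TopologicalSpace α] [MeasurableSpace α]
  [TopologicalSpace β] [MeasurableSpace β] [BorelSpace β] [T2Space β]

theorem Regular.of_le {μ σ : Measure β} [IsFiniteMeasure σ] [σ.Regular] (h : μ ≤ σ) :
    μ.Regular := by
  have : IsFiniteMeasure μ := isFiniteMeasure_of_le σ h
  have : μ.InnerRegularCompactLTTop := by
    refine ⟨fun A ⟨hA, _⟩ r hr => ?_⟩
    obtain ⟨K, hKA, hK, hσ⟩ :=
      hA.exists_isCompact_sdiff_lt (measure_ne_top σ A) (tsub_pos_of_lt hr).ne'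
    have hμA : μ A < μ K + (μ A - r) := calc
      μ A = μ K + μ (A \ K) := by
        rw [measure_add_sdiff hK.isClosed.measurableSet.nullMeasurableSet, union_eq_right.2 hKA]
      _ ≤ μ K + σ (A \ K) := by gcongr
      _ < μ K + (μ A - r) := ENNReal.add_lt_add_left (measure_ne_top _ _) hσ
    refine ⟨K, hKA, hK, ?_⟩
    calc r = μ A - (μ A - r) := (ENNReal.sub_sub_cancel (measure_ne_top μ A) hr.le).symm
      _ < μ K := (ENNReal.sub_lt_iff_lt_right (by finiteness) tsub_le_self).2 hμA
  infer_instance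

theorem Regular.map_of_isCompact_image {μ : Measure α} [IsFiniteMeasure μ] [μ.Regular]
    {f : α → β} (hf : Measurable f) (hK : ∀ K, IsCompact K → IsCompact (f '' K)) :
    (μ.map f).Regular := by
  have : (μ.map f).InnerRegular :=
    ⟨InnerRegular.innerRegular.map hf.aemeasurable (fun _ hU => hf hU) hK fun _ hU => hU⟩
  infer_instance

end MeasureTheory.Measure

theorem msupport_subset_of_measure_compl_eq_zero {α : Type*} [TopologicalSpace α]
    [MeasurableSpace α] {μ : Measure α} {H : Set α} (hH : IsClosed H) (h : μ Hᶜ = 0) :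
    msupport μ ⊆ H := fun x hx => by
  by_contra hxH
  exact hx Hᶜ (hH.isOpen_compl.mem_nhds hxH) h

section CompactLine

variable {I : Type*} [LinearOrder I] [TopologicalSpace I] [OrderTopology I] [CompactSpace I]
  {H : Set I} {m : I}

noncomputable def ceilIn (hH : IsClosed H) (hm : IsGreatest H m) (x : I) : I :=
  ((hH.inter isClosed_Ici).isCompact.exists_isLeast
    (⟨m, hm.1, min_le_right x m⟩ : (H ∩ Ici (min x m)).Nonempty)).choose

variable (hH : IsClosed H) (hm : IsGreatest H m)
include hH hm

theorem isLeast_ceilIn (x : I) : IsLeast (H ∩ Ici (min x m)) (ceilIn hH hm x) :=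
  Exists.choose_spec _

theorem ceilIn_mem (x : I) : ceilIn hH hm x ∈ H := (isLeast_ceilIn hH hm x).1.1

theorem min_le_ceilIn (x : I) : min x m ≤ ceilIn hH hm x := (isLeast_ceilIn hH hm x).1.2

theorem ceilIn_le_iff {x t : I} (ht : t ∈ H) : ceilIn hH hm x ≤ t ↔ min x m ≤ t :=
  ⟨(min_le_ceilIn hH hm x).trans, fun h => (isLeast_ceilIn hH hm x).2 ⟨ht, h⟩⟩

theorem ceilIn_eq_self {x : I} (hx : x ∈ H) : ceilIn hH hm x = x := by
  have hxm : min x m = x := min_eq_left (hm.2 hx)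
  refine le_antisymm ((ceilIn_le_iff hH hm hx).2 hxm.le) ?_
  simpa [hxm] using min_le_ceilIn hH hm x

theorem monotone_ceilIn : Monotone (ceilIn hH hm) := fun _ y hxy =>
  (ceilIn_le_iff hH hm (ceilIn_mem hH hm y)).2
    ((min_le_min_right m hxy).trans (min_le_ceilIn hH hm y))

theorem preimage_ceilIn_Iic {t : I} (ht : t ∈ H) (htm : t < m) :
    ceilIn hH hm ⁻¹' Iic t = Iic t := by
  ext x
  simp [ceilIn_le_iff hH hm ht, htm.not_ge]

theorem lt_of_lt_ceilIn {x y : I} (hy : y ∈ H) (h : y < ceilIn hH hm x) : y < x :=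
  lt_of_not_ge fun hxy => h.not_ge ((ceilIn_le_iff hH hm hy).2 (min_le_of_left_le hxy))

theorem ceilIn_eq_of_uIcc_subset_compl {x y : I} (h : uIcc x y ⊆ Hᶜ) :
    ceilIn hH hm x = ceilIn hH hm y := by
  wlog hxy : x ≤ y generalizing x y
  · exact (this (uIcc_comm x y ▸ h) (le_of_not_ge hxy)).symm
  refine (monotone_ceilIn hH hm hxy).antisymm ((ceilIn_le_iff hH hm (ceilIn_mem hH hm x)).2 ?_)
  rcases le_or_gt x (ceilIn hH hm x) with hx | hx
  · have : ceilIn hH hm x ∉ Icc x y := fun hI => h (Icc_subset_uIcc hI) (ceilIn_mem hH hm x)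
    exact min_le_of_left_le (le_of_lt (by simpa [hx] using this))
  · have hmx : m < x := by simpa using (min_le_ceilIn hH hm x).trans_lt hx
    calc min y m ≤ m := min_le_right y m
      _ = min x m := (min_eq_right hmx.le).symm
      _ ≤ ceilIn hH hm x := min_le_ceilIn hH hm x

theorem isOpen_preimage_ceilIn_inter_compl (s : Set I) : IsOpen (ceilIn hH hm ⁻¹' s ∩ Hᶜ) := by
  refine isOpen_iff_mem_nhds.2 fun x ⟨hxs, hxH⟩ => ?_
  refine Filter.mem_of_superset
    (ordConnectedComponent_mem_nhds.2 (hH.isOpen_compl.mem_nhds hxH)) fun y hy => ?_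
  refine ⟨?_, ordConnectedComponent_subset hy⟩
  rw [mem_preimage, ← ceilIn_eq_of_uIcc_subset_compl hH hm (mem_ordConnectedComponent.1 hy)]
  exact hxs

theorem measurable_ceilIn [MeasurableSpace I] [BorelSpace I] : Measurable (ceilIn hH hm) := by
  intro s hs
  have : ceilIn hH hm ⁻¹' s = (ceilIn hH hm ⁻¹' s ∩ Hᶜ) ∪ (s ∩ H) := by
    ext x
    by_cases hx : x ∈ H <;> simp [hx, ceilIn_eq_self hH hm]
  rw [this]
  exact (isOpen_preimage_ceilIn_inter_compl hH hm s).measurableSet.union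
    (hs.inter hH.measurableSet)

theorem isClosed_image_ceilIn {K : Set I} (hK : IsClosed K) : IsClosed (ceilIn hH hm '' K) := by
  set f := ceilIn hH hm
  refine isClosed_of_closure_subset fun y hy => ?_
  have hyH : y ∈ H :=
    hH.closure_subset (closure_mono (image_subset_iff.2 fun x _ => ceilIn_mem hH hm x) hy)
  rw [← inter_union_compl (f '' K) (Iic y), compl_Iic, closure_union] at hy
  rcases hy with hlow | hhigh
  -- `y` is the image of the largest point of `K` sent to or below `y`
  · have hT : IsClosed (K ∩ f ⁻¹' Iic y) := by
      have : f ⁻¹' Iic y = {x | min x m ≤ y} := ext fun x => ceilIn_le_iff hH hm hyH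
      rw [this]
      exact hK.inter (isClosed_le (continuous_id.min continuous_const) continuous_const)
    obtain ⟨_, ⟨x, hxK, rfl⟩, hxy⟩ := closure_nonempty_iff.1 ⟨y, hlow⟩
    obtain ⟨z, ⟨hzK, hzy⟩, hz⟩ := hT.isCompact.exists_isGreatest ⟨x, hxK, hxy⟩
    refine ⟨z, hzK, le_antisymm hzy (closure_minimal ?_ isClosed_Iic hlow)⟩
    rintro _ ⟨⟨x, hxK, rfl⟩, hxy⟩
    exact monotone_ceilIn hH hm (hz ⟨hxK, hxy⟩)
  -- `y` is the image of the least point of `K` above `y`, which must be `y` itself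
  · obtain ⟨_, ⟨x, hxK, rfl⟩, hyx⟩ := closure_nonempty_iff.1 ⟨y, hhigh⟩
    have hym : y < m := hyx.trans_le (hm.2 (ceilIn_mem hH hm x))
    obtain ⟨z, ⟨hzK, hyz⟩, hz⟩ := (hK.inter isClosed_Ici).isCompact.exists_isLeast
      ⟨x, hxK, (lt_of_lt_ceilIn hH hm hyH hyx).le⟩
    rcases hyz.eq_or_lt with rfl | hyz
    · exact ⟨y, hzK, ceilIn_eq_self hH hm hyH⟩
    · have hfz : y < f z := (lt_min hyz hym).trans_le (min_le_ceilIn hH hm z)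
      have : f '' K ∩ Ioi y ⊆ Ici (f z) := by
        rintro _ ⟨⟨x, hxK, rfl⟩, hxy⟩
        exact monotone_ceilIn hH hm (hz ⟨hxK, (lt_of_lt_ceilIn hH hm hyH hxy).le⟩)
      exact absurd (closure_minimal this isClosed_Ici hhigh) hfz.not_ge

end CompactLine

theorem stmt4_general {I : Type*} [LinearOrder I] [TopologicalSpace I] [OrderTopology I]
    [CompactSpace I] [MeasurableSpace I] [BorelSpace I]
    (H : Set I) (hHcl : IsClosed H)
    (m : I) (hm : IsGreatest H m)
    (μ : SignedMeasure I) (hreg : μ.totalVariation.Regular) :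
    ∃ ν : SignedMeasure I, ν.totalVariation.Regular ∧
      msupport ν.totalVariation ⊆ H ∧
      ν Set.univ = μ Set.univ ∧
      (ν.totalVariation Set.univ).toReal ≤ (μ.totalVariation Set.univ).toReal ∧
      ∀ t ∈ H, t ≠ m → ν (Set.Iic t) = μ (Set.Iic t) := by
  set f := ceilIn hHcl hm
  have hf : Measurable f := measurable_ceilIn hHcl hm
  have hσ : (μ.totalVariation.map f).Regular :=
    hreg.map_of_isCompact_image hf fun K hK =>
      (isClosed_image_ceilIn hHcl hm hK.isClosed).isCompact
  set ν : SignedMeasure I := μ.map f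
  have hle : ν.totalVariation ≤ μ.totalVariation.map f := by
    simpa only [SignedMeasure.totalVariation_eq_variation] using μ.variation_map_le
  have hmap : ∀ s, MeasurableSet s → ν s = μ (f ⁻¹' s) :=
    fun s hs => VectorMeasure.map_apply μ hf hs
  refine ⟨ν, Measure.Regular.of_le hle, ?_, ?_, ?_, fun t ht htm => ?_⟩
  · refine msupport_subset_of_measure_compl_eq_zero hHcl (le_zero_iff.1 ((hle _).trans ?_))
    rw [Measure.map_apply hf hHcl.measurableSet.compl, preimage_compl,
      preimage_eq_univ_iff.2 (range_subset_iff.2 (ceilIn_mem hHcl hm)), compl_univ, measure_empty]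
  · rw [hmap _ MeasurableSet.univ, preimage_univ]
  · exact ENNReal.toReal_mono (measure_ne_top _ _) ((hle _).trans
      (by rw [Measure.map_apply hf MeasurableSet.univ, preimage_univ]))
  · rw [hmap _ measurableSet_Iic, preimage_ceilIn_Iic hHcl hm ht ((hm.2 ht).lt_of_ne htm)]

theorem stmt4 {I : Type*} [LinearOrder I] [TopologicalSpace I] [OrderTopology I]
    [CompactSpace I] [Nonempty I] [MeasurableSpace I] [BorelSpace I]
    (H : Set I) (hHne : H.Nonempty) (hHcl : IsClosed H)
    (m : I) (hm : IsGreatest H m)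
    (μ : SignedMeasure I) (hreg : μ.totalVariation.Regular) :
    ∃ ν : SignedMeasure I, ν.totalVariation.Regular ∧
      msupport ν.totalVariation ⊆ H ∧
      ν Set.univ = μ Set.univ ∧
      (ν.totalVariation Set.univ).toReal ≤ (μ.totalVariation Set.univ).toReal ∧
      ∀ t ∈ H, t ≠ m → ν (Set.Iic t) = μ (Set.Iic t) :=
  stmt4_general H hHcl m hm μ hreg
end

section
/- Let L be a compact line with minimum 0 and P a clopen-partition of L (a finite set of right-isolated points of L containing max L). For every finite signed regular Borel measure μ on L there exists a finite signed regular Borel measure μ̃ on L such that: (i) μ̃(I) = 0 for every interval I of the induced partition P̄ of L into clopen intervals; (ii) μ̃([0,t]) = μ([0,t]) for all t ∈ L \ P; (iii) ‖μ̃‖ ≤ ‖μ‖ + 2·Σ_{b∈P} |μ([0,b])|. -/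
/-!
Write `c_b = μ [0, b]` and let `μ̃ = μ + ∑_{b ∈ P} c_b (δ_{b⁺} - δ_b)`, where `δ_{b⁺} = 0` when `b`
is the maximum. Since `b⁺ ≤ t ↔ b < t`, the term for `b` changes `μ [0, t]` by `-c_b` if `t = b`
and not at all otherwise, so `μ̃ [0, t]` is `0` for `t ∈ P` and `μ [0, t]` for `t ∉ P`; every
interval of the induced partition is `[0, b]` or a difference `[0, b] \ [0, b']` with `b, b' ∈ P`.
The variation of `μ̃` is dominated by `|μ| + ∑_b |c_b| (δ_{b⁺} + δ_b)`, which gives the norm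
bound, and regularity passes from this finite regular measure to the smaller one.
-/

open MeasureTheory Set

/-- A point of a linear order is right-isolated if it is the maximum or has a successor. -/
def RightIsolated {L : Type*} [LinearOrder L] (b : L) : Prop :=
  IsMax b ∨ ∃ u, b ⋖ u

/-- The partition of `L` into clopen intervals induced by a finite set `P` of
right-isolated points containing the maximum: the interval `[0, min P]` together with
the intervals `]b', b]` for consecutive elements `b' < b` of `P`. -/
def inducedPartition {L : Type*} [LinearOrder L] (P : Finset L) : Set (Set L) :=
  {I | (∃ b ∈ P, (∀ c ∈ P, b ≤ c) ∧ I = Set.Iic b) ∨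
    (∃ b ∈ P, ∃ b' ∈ P, b' < b ∧ (∀ c ∈ P, c ≤ b' ∨ b ≤ c) ∧ I = Set.Ioc b' b)}

open scoped ENNReal

namespace MeasureTheory.Measure

variable {α : Type*} [MeasurableSpace α] [TopologicalSpace α]

instance (x : α) : (dirac x).InnerRegular where
  innerRegular s hs r hr := by
    by_cases hx : x ∈ s
    · exact ⟨{x}, singleton_subset_iff.2 hx, isCompact_singleton,
        hr.trans_le (prob_le_one.trans (dirac_apply_of_mem (mem_singleton x)).ge)⟩
    · simp [dirac_apply' x hs, hx] at hr

theorem InnerRegular.of_le [T2Space α] [OpensMeasurableSpace α] {ν ρ : Measure α}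
    [IsFiniteMeasure ρ] [ρ.InnerRegular] (h : ν ≤ ρ) : ν.InnerRegular where
  innerRegular s hs r hr := by
    obtain ⟨K, hKs, hK, hsK⟩ := hs.exists_isCompact_sdiff_lt (measure_ne_top ρ s)
      (tsub_pos_of_lt hr).ne'
    refine ⟨K, hKs, hK, lt_of_not_ge fun hKr => lt_irrefl (ν s) ?_⟩
    calc ν s = ν (K ∪ s \ K) := by rw [union_sdiff_cancel hKs]
      _ ≤ r + ρ (s \ K) := (measure_union_le _ _).trans (add_le_add hKr (h _))
      _ < r + (ν s - r) := ENNReal.add_lt_add_left (hr.trans_le le_top).ne hsK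
      _ = ν s := add_tsub_cancel_of_le hr.le

end MeasureTheory.Measure

instance MeasureTheory.SignedMeasure.isFiniteMeasure_variation {α : Type*} [MeasurableSpace α]
    (s : SignedMeasure α) : IsFiniteMeasure (VectorMeasure.variation s) :=
  s.totalVariation_eq_variation ▸ inferInstance

namespace MeasureTheory.VectorMeasure

variable {L M : Type*} [LinearOrder L] [MeasurableSpace L]

theorem apply_Ioc_eq_sub [AddCommGroup M] [TopologicalSpace M] [T2Space M] [TopologicalSpace L]
    [OrderClosedTopology L] [OpensMeasurableSpace L] (ν : VectorMeasure L M) {a b : L}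
    (hab : a ≤ b) : ν (Ioc a b) = ν (Iic b) - ν (Iic a) := by
  rw [← Iic_union_Ioc_eq_Iic hab,
    of_union (Iic_disjoint_Ioc le_rfl) measurableSet_Iic measurableSet_Ioc, add_sub_cancel_left]

section SuccDirac

variable [AddCommMonoid M] [TopologicalSpace M]

open Classical in
noncomputable def succDirac (b : L) (v : M) : VectorMeasure L M :=
  if h : ∃ u, b ⋖ u then dirac h.choose v else 0

theorem succDirac_apply_Iic [TopologicalSpace L] [OrderClosedTopology L] [OpensMeasurableSpace L]
    {b : L} (hb : RightIsolated b) (v : M) (t : L) :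
    succDirac b v (Iic t) = if b < t then v else 0 := by
  unfold succDirac
  split_ifs with h hbt hbt
  · exact dirac_apply_of_mem measurableSet_Iic (h.choose_spec.ge_of_gt hbt)
  · exact dirac_apply_of_notMem fun hut => hbt (h.choose_spec.lt.trans_le hut)
  · exact (hb.resolve_right h |>.not_lt hbt).elim
  · rfl

end SuccDirac

section Transfer

variable [AddCommGroup M] [TopologicalSpace M] [IsTopologicalAddGroup M]

/-- The measure `μ̃` of the paper. -/
noncomputable def transferToSucc (P : Finset L) (μ : VectorMeasure L M) : VectorMeasure L M :=
  μ + ∑ b ∈ P, (succDirac b (μ (Iic b)) - dirac b (μ (Iic b)))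

variable [TopologicalSpace L] [OrderClosedTopology L] [OpensMeasurableSpace L]
  {P : Finset L} {μ : VectorMeasure L M}

theorem transferToSucc_apply_Iic (hP : ∀ b ∈ P, RightIsolated b) (t : L) :
    transferToSucc P μ (Iic t) = if t ∈ P then 0 else μ (Iic t) := by
  classical
  have hterm : ∀ b ∈ P, (succDirac b (μ (Iic b)) - dirac b (μ (Iic b))) (Iic t)
      = -(if t = b then μ (Iic b) else 0) := by
    intro b hb
    rw [sub_apply, succDirac_apply_Iic (hP b hb)]
    rcases lt_trichotomy b t with hbt | rfl | htb
    · simp [hbt, hbt.le, hbt.ne', measurableSet_Iic]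
    · simp [measurableSet_Iic]
    · simp [htb.not_gt, htb.not_ge, htb.ne]
  rw [transferToSucc, add_apply, FunLike.coe_sum, Finset.sum_apply, Finset.sum_congr rfl hterm,
    Finset.sum_neg_distrib, Finset.sum_ite_eq]
  split_ifs <;> simp

theorem transferToSucc_apply_of_mem_inducedPartition [T2Space M]
    (hP : ∀ b ∈ P, RightIsolated b) {I : Set L} (hI : I ∈ inducedPartition P) : transferToSucc P μ I = 0 := by
  rcases hI with ⟨b, hb, -, rfl⟩ | ⟨b, hb, a, ha, hab, -, rfl⟩
  · simp [transferToSucc_apply_Iic hP, hb]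
  · simp [apply_Ioc_eq_sub _ hab.le, transferToSucc_apply_Iic hP, ha, hb]

end Transfer

section Variation

variable [NormedAddCommGroup M]

instance (b : L) (v : M) : IsFiniteMeasure (succDirac b v).variation := by
  unfold succDirac
  split_ifs
  · infer_instance
  · rw [variation_zero]; infer_instance

instance [TopologicalSpace L] (b : L) (v : M) : (succDirac b v).variation.InnerRegular := by
  unfold succDirac; split_ifs <;> simp only [variation_dirac, variation_zero] <;> infer_instance

theorem variation_succDirac_univ_le (b : L) (v : M) : (succDirac b v).variation univ ≤ ‖v‖ₑ := by
  unfold succDirac; split_ifs <;> simp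

theorem variation_transferToSucc_le (P : Finset L) (μ : VectorMeasure L M) :
    (transferToSucc P μ).variation ≤ μ.variation +
      ∑ b ∈ P, ((succDirac b (μ (Iic b))).variation + ‖μ (Iic b)‖₊ • Measure.dirac b) := by
  rw [transferToSucc]
  grw [variation_add_le, variation_finsetSum_le]
  gcongr with b
  rw [← Measure.coe_nnreal_smul, ← enorm_eq_nnnorm, ← variation_dirac]
  exact variation_sub_le

theorem variation_transferToSucc_univ_le (P : Finset L) (μ : VectorMeasure L M) :
    (transferToSucc P μ).variation univ ≤ μ.variation univ + 2 * ∑ b ∈ P, ‖μ (Iic b)‖ₑ := by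
  refine (Measure.le_iff'.1 (variation_transferToSucc_le P μ) univ).trans ?_
  simp only [Measure.add_apply, Measure.finsetSum_apply, Measure.smul_apply, measure_univ,
    ENNReal.smul_def, smul_eq_mul, mul_one, Finset.mul_sum, two_mul, enorm_eq_nnnorm]
  gcongr
  simpa only [enorm_eq_nnnorm] using variation_succDirac_univ_le _ _

theorem variation_transferToSucc_real_univ_le (P : Finset L) (μ : VectorMeasure L M)
    [IsFiniteMeasure μ.variation] :
    (transferToSucc P μ).variation.real univ ≤
      μ.variation.real univ + 2 * ∑ b ∈ P, ‖μ (Iic b)‖ := by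
  have hsum : 2 * ∑ b ∈ P, ‖μ (Iic b)‖ₑ ≠ ∞ :=
    ENNReal.mul_ne_top ENNReal.ofNat_ne_top (ENNReal.sum_ne_top.2 fun _ _ => enorm_ne_top)
  rw [measureReal_def, measureReal_def]
  refine (ENNReal.toReal_mono (ENNReal.add_ne_top.2 ⟨measure_ne_top _ _, hsum⟩)
    (variation_transferToSucc_univ_le P μ)).trans_eq ?_
  rw [ENNReal.toReal_add (measure_ne_top _ _) hsum, ENNReal.toReal_mul,
    ENNReal.toReal_sum fun _ _ => enorm_ne_top]
  simp

theorem regular_variation_transferToSucc [TopologicalSpace L] [T2Space L] [BorelSpace L]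
    (P : Finset L) (μ : VectorMeasure L M) [IsFiniteMeasure μ.variation] [μ.variation.Regular] :
    (transferToSucc P μ).variation.Regular := by
  have := isFiniteMeasure_of_le _ (variation_transferToSucc_le P μ)
  have := Measure.InnerRegular.of_le (variation_transferToSucc_le P μ)
  infer_instance

end Variation

end MeasureTheory.VectorMeasure

theorem stmt5_general {L : Type*} [LinearOrder L] [TopologicalSpace L] [OrderTopology L]
    [MeasurableSpace L] [BorelSpace L]
    (P : Finset L)
    (hPiso : ∀ b ∈ P, RightIsolated b)
    (μ : SignedMeasure L) (hreg : μ.totalVariation.Regular) :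
    ∃ μt : SignedMeasure L, μt.totalVariation.Regular ∧
      (∀ I ∈ inducedPartition P, μt I = 0) ∧
      (∀ t : L, t ∉ P → μt (Set.Iic t) = μ (Set.Iic t)) ∧
      (μt.totalVariation Set.univ).toReal ≤
        (μ.totalVariation Set.univ).toReal + 2 * ∑ b ∈ P, |μ (Set.Iic b)| := by
  simp only [SignedMeasure.totalVariation_eq_variation] at hreg ⊢
  refine ⟨VectorMeasure.transferToSucc P μ, VectorMeasure.regular_variation_transferToSucc P μ,
    fun I hI => VectorMeasure.transferToSucc_apply_of_mem_inducedPartition hPiso hI,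
    fun t ht => by rw [VectorMeasure.transferToSucc_apply_Iic hPiso, if_neg ht], ?_⟩
  simpa only [measureReal_def, Real.norm_eq_abs] using
    VectorMeasure.variation_transferToSucc_real_univ_le P μ

theorem stmt5 {L : Type*} [LinearOrder L] [TopologicalSpace L] [OrderTopology L]
    [CompactSpace L] [Nonempty L] [MeasurableSpace L] [BorelSpace L]
    (P : Finset L) (hPne : ∃ m ∈ P, IsMax m)
    (hPiso : ∀ b ∈ P, RightIsolated b)
    (μ : SignedMeasure L) (hreg : μ.totalVariation.Regular) :
    ∃ μt : SignedMeasure L, μt.totalVariation.Regular ∧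
      (∀ I ∈ inducedPartition P, μt I = 0) ∧
      (∀ t : L, t ∉ P → μt (Set.Iic t) = μ (Set.Iic t)) ∧
      (μt.totalVariation Set.univ).toReal ≤
        (μ.totalVariation Set.univ).toReal + 2 * ∑ b ∈ P, |μ (Set.Iic b)| :=
  stmt5_general P hPiso μ hreg
end

section
/- Let K be a compact line with minimum 0. For each measure μ ∈ M(K), the function F_μ(t) = μ([0,t]) is right-continuous and satisfies |F_μ(0)| + V(F_μ) ≤ ‖μ‖, where V denotes total variation and ‖μ‖ the total variation norm of μ. -/
/-!
Write `ν = |μ|`. Since `F_μ u - F_μ t = μ (t, u]` and `|μ A| ≤ ν A`, both claims reduce to estimates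
for `ν`. Right-continuity at `t`: outer regularity gives an open `U ⊇ (-∞, t]` with
`ν (U \ (-∞, t]) < ε`, and `U` contains `(t, u]` for `u` close to `t`. Countable additivity alone
would not do, since `t` need not have a countable base of right neighbourhoods. Variation: for a
chain `t₀ < ⋯ < tₙ` the sets `[0, 0]` and `(tᵢ, tᵢ₊₁]` are pairwise disjoint, so
`|F_μ 0| + ∑ |F_μ tᵢ₊₁ - F_μ tᵢ| ≤ ν K`.
-/

open MeasureTheory Set

/-- The total variation of `F : K → ℝ`. -/
noncomputable def variation {K : Type*} [LinearOrder K] (F : K → ℝ) : ℝ :=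
  sSup {v | ∃ (n : ℕ) (t : Fin (n + 1) → K), StrictMono t ∧
    v = ∑ i : Fin n, |F (t i.succ) - F (t i.castSucc)|}

open Filter Function Topology

theorem MeasureTheory.SignedMeasure.sum_abs_apply_le_totalVariation {α ι : Type*}
    [MeasurableSpace α] [Fintype ι] (μ : SignedMeasure α) {s : ι → Set α}
    (hd : Pairwise (Disjoint on s)) (hs : ∀ i, MeasurableSet (s i)) :
    ∑ i, |μ (s i)| ≤ μ.totalVariation.real (⋃ i, s i) := by
  rw [measureReal_iUnion_fintype hd hs]
  exact Finset.sum_le_sum fun i _ => μ.norm_le_totalVariation (s i)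

theorem Monotone.pairwise_disjoint_on_Ioc_castSucc_succ {K : Type*} [Preorder K] {n : ℕ}
    {t : Fin (n + 1) → K} (ht : Monotone t) :
    Pairwise (Disjoint on fun i : Fin n => Ioc (t i.castSucc) (t i.succ)) :=
  (pairwise_disjoint_on _).2 fun _ _ hij =>
    Ioc_disjoint_Ioc_of_le (ht (Fin.succ_le_castSucc_iff.2 hij))

section
variable {K : Type*} [LinearOrder K] [TopologicalSpace K] [OrderTopology K]
  [MeasurableSpace K] [OpensMeasurableSpace K]

theorem MeasureTheory.tendsto_measure_Ioc_nhdsGE_zero (ν : Measure K) [ν.OuterRegular] {t : K}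
    (ht : ν (Iic t) ≠ ⊤) : Tendsto (fun u => ν (Ioc t u)) (𝓝[≥] t) (𝓝 0) := by
  refine ENNReal.tendsto_nhds_zero.2 fun ε hε => ?_
  obtain ⟨U, hU_sup, hU_open, hU_lt⟩ :=
    (Iic t).exists_isOpen_lt_of_lt (ν (Iic t) + ε) (ENNReal.lt_add_right ht hε.ne')
  have hIoc_sub : ∀ᶠ u in 𝓝[≥] t, Ioc t u ⊆ U :=
    tendsto_smallSets_iff.1 (tendsto_const_nhds.Ioc (tendsto_id.mono_left nhdsWithin_le_nhds))
      U (hU_open.mem_nhds (hU_sup self_mem_Iic))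
  filter_upwards [hIoc_sub] with u hu
  calc ν (Ioc t u) ≤ ν (U \ Iic t) :=
        measure_mono fun x hx => ⟨hu hx, not_le.2 hx.1⟩
    _ = ν U - ν (Iic t) := measure_sdiff hU_sup measurableSet_Iic.nullMeasurableSet ht
    _ ≤ ε := tsub_le_iff_left.2 hU_lt.le

theorem MeasureTheory.SignedMeasure.apply_Iic_sub_apply_Iic (μ : SignedMeasure K) {a b : K}
    (hab : a ≤ b) : μ (Iic b) - μ (Iic a) = μ (Ioc a b) := by
  rw [← Iic_union_Ioc_eq_Iic hab, μ.of_union (Iic_disjoint_Ioc le_rfl) measurableSet_Iic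
    measurableSet_Ioc, add_sub_cancel_left]

theorem MeasureTheory.SignedMeasure.continuousWithinAt_apply_Iic (μ : SignedMeasure K)
    [μ.totalVariation.OuterRegular] (t : K) :
    ContinuousWithinAt (fun s => μ (Iic s)) (Ici t) t := by
  rw [ContinuousWithinAt, tendsto_iff_norm_sub_tendsto_zero]
  have hIoc : Tendsto (fun u => μ.totalVariation.real (Ioc t u)) (𝓝[≥] t) (𝓝 0) :=
    (ENNReal.tendsto_toReal ENNReal.zero_ne_top).comp
      (tendsto_measure_Ioc_nhdsGE_zero _ (measure_ne_top _ _))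
  refine squeeze_zero' (Eventually.of_forall fun _ => norm_nonneg _) ?_ hIoc
  filter_upwards [self_mem_nhdsWithin] with u (hu : t ≤ u)
  rw [μ.apply_Iic_sub_apply_Iic hu]
  exact μ.norm_le_totalVariation _

theorem MeasureTheory.SignedMeasure.abs_apply_Iic_add_sum_abs_apply_Ioc_le
    (μ : SignedMeasure K) {z : K} {n : ℕ} {t : Fin (n + 1) → K} (ht : Monotone t)
    (hz : z ≤ t 0) :
    |μ (Iic z)| + ∑ i : Fin n, |μ (Ioc (t i.castSucc) (t i.succ))| ≤
      μ.totalVariation.real univ := by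
  set S := ⋃ i : Fin n, Ioc (t i.castSucc) (t i.succ)
  have hdisj : Disjoint (Iic z) S :=
    disjoint_iUnion_right.2 fun i => Iic_disjoint_Ioc (hz.trans (ht (Fin.zero_le _)))
  calc |μ (Iic z)| + ∑ i : Fin n, |μ (Ioc (t i.castSucc) (t i.succ))|
      ≤ μ.totalVariation.real (Iic z) + μ.totalVariation.real S :=
        add_le_add (μ.norm_le_totalVariation _)
          (μ.sum_abs_apply_le_totalVariation ht.pairwise_disjoint_on_Ioc_castSucc_succ
            fun _ => measurableSet_Ioc)
    _ = μ.totalVariation.real (Iic z ∪ S) :=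
        (measureReal_union hdisj (MeasurableSet.iUnion fun _ => measurableSet_Ioc)).symm
    _ ≤ μ.totalVariation.real univ := measureReal_mono (subset_univ _)

theorem MeasureTheory.SignedMeasure.variation_apply_Iic_le (μ : SignedMeasure K) {z : K}
    (hz : ∀ t, z ≤ t) :
    variation (fun s => μ (Iic s)) ≤ μ.totalVariation.real univ - |μ (Iic z)| := by
  refine Real.sSup_le ?_ ?_
  · rintro _ ⟨n, t, ht, rfl⟩
    have hterm : ∀ i : Fin n, μ (Iic (t i.succ)) - μ (Iic (t i.castSucc)) =
        μ (Ioc (t i.castSucc) (t i.succ)) :=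
      fun i => μ.apply_Iic_sub_apply_Iic (ht.monotone (Fin.castSucc_le_succ i))
    simp only [hterm]
    exact le_sub_iff_add_le'.2 (μ.abs_apply_Iic_add_sum_abs_apply_Ioc_le ht.monotone (hz _))
  · exact sub_nonneg.2 ((μ.norm_le_totalVariation _).trans (measureReal_mono (subset_univ _)))

end

theorem stmt7_general {K : Type*} [LinearOrder K] [TopologicalSpace K] [OrderTopology K]
    [MeasurableSpace K] [BorelSpace K]
    (z : K) (hz : ∀ t, z ≤ t)
    (μ : SignedMeasure K) (hreg : μ.totalVariation.Regular) :
    (∀ t : K, ContinuousWithinAt (fun s => μ (Set.Iic s)) (Set.Ici t) t) ∧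
    |μ (Set.Iic z)| + variation (fun t => μ (Set.Iic t))
      ≤ (μ.totalVariation Set.univ).toReal := by
  have := hreg.toOuterRegular
  exact ⟨μ.continuousWithinAt_apply_Iic,
    le_sub_iff_add_le'.1 (μ.variation_apply_Iic_le hz)⟩

theorem stmt7 {K : Type*} [LinearOrder K] [TopologicalSpace K] [OrderTopology K]
    [CompactSpace K] [Nonempty K] [MeasurableSpace K] [BorelSpace K]
    (z : K) (hz : ∀ t, z ≤ t)
    (μ : SignedMeasure K) (hreg : μ.totalVariation.Regular) :
    (∀ t : K, ContinuousWithinAt (fun s => μ (Set.Iic s)) (Set.Ici t) t) ∧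
    |μ (Set.Iic z)| + variation (fun t => μ (Set.Iic t))
      ≤ (μ.totalVariation Set.univ).toReal :=
  stmt7_general z hz μ hreg
end

section
/- Let K be a zero-dimensional compact line, L a compact line, q : K → L a continuous increasing surjection, and Q = {t ∈ L : |q⁻¹(t)| > 1}. Let (μ_n) be a weak*-null sequence in M(L). If there exists a bounded operator T' : C(K) → c₀ with T' ∘ q* = T, where T : C(L) → c₀ is the operator associated with (μ_n), then there exists a countable subset E of Q such that μ_n([0,t]) → 0 for all t ∈ Q \ E. -/
/-!
For `t ∈ Q`, zero-dimensionality of `K` gives a clopen initial segment `C t` with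
`q⁻¹ [0, t) ⊆ C t ⊆ q⁻¹ [0, t]`, and `T' 1_{C t} ∈ c₀`. Fix `n` and a finite `S ⊆ Q`. By regularity
there are Urysohn functions `f t ∈ C(L)` with `∫ f t dμₙ ≈ μₙ [0, t]` which vanish beyond the next
point of `S`; then the functions `f t ∘ q - 1_{C t}` take values in `[0, 1]` and have pairwise
disjoint supports, so testing `T'` against a signed sum of them gives
`∑ t ∈ S, |μₙ [0, t] - (T' 1_{C t})ₙ| ≤ ‖T'‖`. This family is thus summable over `Q`, so
`μₙ [0, t] = (T' 1_{C t})ₙ` for all but countably many `t ∈ Q`, and off the union `E` of these exceptional sets `μₙ [0, t] = (T' 1_{C t})ₙ → 0`.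
-/

open MeasureTheory Set Filter Topology ZeroAtInfty

/-- Integral of a continuous function against a signed measure. -/
noncomputable def sint {K : Type*} [TopologicalSpace K] [MeasurableSpace K]
    (μ : SignedMeasure K) (f : C(K, ℝ)) : ℝ :=
  ∫ x, f x ∂μ.toJordanDecomposition.posPart - ∫ x, f x ∂μ.toJordanDecomposition.negPart

open Function

section ClopenInitialSegment

variable {K : Type*} [LinearOrder K] [TopologicalSpace K] [OrderTopology K] [CompactIccSpace K]

/-- If `U` is clopen with `x ∈ U ⊆ Iio y` and `c` is the largest point of `U ∩ Icc x y`,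
then `Ioi c = Uᶜ ∩ Ici c` is closed. -/
theorem exists_isClopen_Iic_mem_Ico
    (hK : TopologicalSpace.IsTopologicalBasis {U : Set K | IsClopen U}) {x y : K} (hxy : x < y) :
    ∃ c ∈ Ico x y, IsClopen (Iic c) := by
  obtain ⟨U, hU, hxU, hUy⟩ := hK.exists_subset_of_mem_open (mem_Iio.mpr hxy) isOpen_Iio
  have hU : IsClopen U := hU
  obtain ⟨c, ⟨hcU, hxc, -⟩, hc⟩ :=
    (isCompact_Icc.inter_left hU.isClosed).exists_isGreatest ⟨x, hxU, le_rfl, hxy.le⟩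
  have hcy : c < y := hUy hcU
  have hIoi : Ioi c = Uᶜ ∩ Ici c := by
    ext z
    refine ⟨fun hz => ⟨fun hzU => ?_, le_of_lt hz⟩, fun ⟨hzU, hcz⟩ => ?_⟩
    · exact (hc ⟨hzU, hxc.trans (le_of_lt hz), (hUy hzU).le⟩).not_gt hz
    · exact lt_of_le_of_ne hcz (by rintro rfl; exact hzU hcU)
  refine ⟨c, ⟨hxc, hcy⟩, isClosed_Iic, ?_⟩
  rw [← compl_Ioi, isOpen_compl_iff, hIoi]
  exact hU.compl.isClosed.inter isClosed_Ici

theorem exists_isClopen_between_preimage_Iio_Iic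
    (hK : TopologicalSpace.IsTopologicalBasis {U : Set K | IsClopen U})
    {L : Type*} [Preorder L] {q : K → L} (hq : Monotone q) {x y : K} {t : L}
    (hx : q x = t) (hy : q y = t) (hxy : x ≠ y) :
    ∃ C : Set K, IsClopen C ∧ q ⁻¹' Iio t ⊆ C ∧ C ⊆ q ⁻¹' Iic t := by
  wlog hlt : x < y generalizing x y
  · exact this hy hx hxy.symm (hxy.lt_or_gt.resolve_left hlt)
  obtain ⟨c, ⟨hxc, hcy⟩, hc⟩ := exists_isClopen_Iic_mem_Ico hK hlt
  refine ⟨Iic c, hc, fun z hz => ?_, fun z hz => ?_⟩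
  · by_contra hcz
    exact (hx ▸ hz : q z < q x).not_ge (hq (hxc.trans (le_of_not_ge hcz)))
  · exact hy ▸ hq (le_trans hz hcy.le)

end ClopenInitialSegment

section Urysohn

variable {X : Type*} [MeasurableSpace X]

theorem measureReal_le_integral_le_measureReal (m : Measure X) [IsFiniteMeasure m] {f : X → ℝ}
    (hf : AEStronglyMeasurable f m) {A V : Set X} (hA : MeasurableSet A) (hV : MeasurableSet V)
    (hf01 : ∀ x, f x ∈ Icc (0 : ℝ) 1) (hfA : EqOn f 1 A) (hfV : EqOn f 0 Vᶜ) :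
    m.real A ≤ ∫ x, f x ∂m ∧ ∫ x, f x ∂m ≤ m.real V := by
  have hfi : Integrable f m := .of_bound hf 1 (.of_forall fun x => by
    obtain ⟨h0, h1⟩ := hf01 x
    rw [Real.norm_eq_abs, abs_le]; constructor <;> linarith)
  rw [← integral_indicator_one hA, ← integral_indicator_one hV]
  constructor
  · refine integral_mono ((integrable_const 1).indicator hA) hfi fun x => ?_
    by_cases hx : x ∈ A
    · simp [hx, hfA hx]
    · simp [hx, (hf01 x).1]
  · refine integral_mono hfi ((integrable_const 1).indicator hV) fun x => ?_
    by_cases hx : x ∈ V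
    · simp [hx, (hf01 x).2]
    · simp [hx, hfV hx]

variable [TopologicalSpace X] [NormalSpace X] [OpensMeasurableSpace X]

theorem exists_continuous_abs_sub_sint_le (μ : SignedMeasure X) [μ.totalVariation.OuterRegular]
    {F W : Set X} (hF : IsClosed F) (hW : IsOpen W) (hFW : F ⊆ W) {ε : ℝ} (hε : 0 < ε) :
    ∃ f : C(X, ℝ), (∀ x, f x ∈ Icc (0 : ℝ) 1) ∧ EqOn f 1 F ∧ EqOn f 0 Wᶜ ∧
      |μ F - sint μ f| ≤ ε := by
  obtain ⟨U, hFU, hU, -, hUF⟩ := hF.measurableSet.exists_isOpen_sdiff_lt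
    (measure_ne_top μ.totalVariation F) (ENNReal.ofReal_pos.mpr hε).ne'
  set V := U ∩ W
  have hFV : F ⊆ V := subset_inter hFU hFW
  have hV : IsOpen V := hU.inter hW
  obtain ⟨f, hf0, hf1, hf01⟩ := exists_continuous_zero_one_of_isClosed hV.isClosed_compl hF
    (disjoint_compl_left_iff_subset.mpr hFV)
  have hfW : EqOn f 0 Wᶜ := fun x hx => hf0 fun hxV => hx hxV.2
  refine ⟨f, hf01, hf1, hfW, ?_⟩
  set μp := μ.toJordanDecomposition.posPart
  set μn := μ.toJordanDecomposition.negPart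
  have hp := measureReal_le_integral_le_measureReal μp f.continuous.aestronglyMeasurable
    hF.measurableSet hV.measurableSet hf01 hf1 hf0
  have hn := measureReal_le_integral_le_measureReal μn f.continuous.aestronglyMeasurable
    hF.measurableSet hV.measurableSet hf01 hf1 hf0
  have htv : μp.real V + μn.real V - (μp.real F + μn.real F) ≤ ε := by
    have hVF : μ.totalVariation.real (V \ F) ≤ ε := ENNReal.toReal_le_of_le_ofReal hε.le
      ((measure_mono (sdiff_subset_sdiff_left inter_subset_left)).trans hUF.le)
    rwa [measureReal_sdiff hFV hF.measurableSet, SignedMeasure.totalVariation,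
      measureReal_add_apply, measureReal_add_apply] at hVF
  rw [μ.apply_eq_posPart_real_sub_negPart_real hF.measurableSet, sint, abs_le]
  constructor <;> linarith [hp.1, hp.2, hn.1, hn.2]

end Urysohn

section CoordinateFunctional

theorem abs_sum_apply_le_one_of_pairwiseDisjoint_support {ι X : Type*} {s : Finset ι}
    {g : ι → X → ℝ} (hg : ∀ i x, |g i x| ≤ 1)
    (hdisj : (s : Set ι).PairwiseDisjoint fun i => support (g i)) (x : X) :
    |∑ i ∈ s, g i x| ≤ 1 := by
  by_cases hx : ∃ i ∈ s, g i x ≠ 0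
  · obtain ⟨i, hi, hix⟩ := hx
    rw [Finset.sum_eq_single_of_mem i hi fun j hj hji => ?_]
    · exact hg i x
    by_contra hjx
    exact disjoint_left.mp (hdisj hj hi hji) hjx hix
  · push Not at hx
    rw [Finset.sum_eq_zero hx, abs_zero]
    exact zero_le_one

theorem ZeroAtInftyContinuousMap.sum_apply {ι α β : Type*} [TopologicalSpace α]
    [TopologicalSpace β] [AddCommMonoid β] [ContinuousAdd β] (s : Finset ι) (f : ι → C₀(α, β))
    (a : α) : (∑ i ∈ s, f i) a = ∑ i ∈ s, f i a :=
  map_sum (⟨⟨fun f : C₀(α, β) => f a, rfl⟩, fun _ _ => rfl⟩ : C₀(α, β) →+ β) f s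

variable {X α : Type*} [TopologicalSpace X] [CompactSpace X] [TopologicalSpace α]

theorem ZeroAtInftyContinuousMap.abs_apply_le_opNorm_mul_norm (T : C(X, ℝ) →L[ℝ] C₀(α, ℝ))
    (g : C(X, ℝ)) (a : α) : |T g a| ≤ ‖T‖ * ‖g‖ :=
  calc |T g a| = ‖(T g).toBCF a‖ := rfl
    _ ≤ ‖(T g).toBCF‖ := BoundedContinuousFunction.norm_coe_le_norm _ a
    _ = ‖T g‖ := norm_toBCF_eq_norm
    _ ≤ ‖T‖ * ‖g‖ := T.le_opNorm g

/-- Testing `T` against `∑ ± h i`, a function of norm at most one. -/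
theorem ZeroAtInftyContinuousMap.sum_abs_apply_le_opNorm {ι : Type*}
    (T : C(X, ℝ) →L[ℝ] C₀(α, ℝ)) (a : α) {s : Finset ι} {h : ι → C(X, ℝ)}
    (hh : ∀ i x, |h i x| ≤ 1) (hdisj : (s : Set ι).PairwiseDisjoint fun i => support (h i)) :
    ∑ i ∈ s, |T (h i) a| ≤ ‖T‖ := by
  set σ : ι → ℝ := fun i => SignType.sign (T (h i) a)
  set F : C(X, ℝ) := ∑ i ∈ s, σ i • h i
  have hσ : ∀ i, |σ i| ≤ 1 := fun i => by
    simp only [σ]; rcases lt_trichotomy (T (h i) a) 0 with h | h | h <;> simp [h]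
  have hF : ‖F‖ ≤ 1 := by
    refine (ContinuousMap.norm_le F zero_le_one).mpr fun x => ?_
    have := abs_sum_apply_le_one_of_pairwiseDisjoint_support (g := fun i x => σ i * h i x)
      (fun i x => by rw [abs_mul]; exact mul_le_one₀ (hσ i) (abs_nonneg _) (hh i x))
      (hdisj.mono fun i => support_mul_subset_right _ _) x
    simpa [F, Real.norm_eq_abs] using this
  calc ∑ i ∈ s, |T (h i) a| = T F a := by
        simp [F, σ, sum_apply, sign_mul_self]
    _ ≤ |T F a| := le_abs_self _
    _ ≤ ‖T‖ * ‖F‖ := abs_apply_le_opNorm_mul_norm T F a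
    _ ≤ ‖T‖ := mul_le_of_le_one_right (norm_nonneg T) hF

end CoordinateFunctional

section IndicatorDifference

variable {K L : Type*} [LinearOrder L] {q : K → L} {f : L → ℝ} {t : L} {C : Set K}

theorem comp_sub_indicator_eq_indicator_compl (hf : EqOn f 1 (Iic t)) (hC : C ⊆ q ⁻¹' Iic t) :
    f ∘ q - C.indicator 1 = Cᶜ.indicator (f ∘ q) := by
  funext x
  by_cases hx : x ∈ C
  · simp [hx, hf (hC hx)]
  · simp [hx]

theorem abs_comp_sub_indicator_le_one (hf01 : ∀ y, f y ∈ Icc (0 : ℝ) 1) (hf : EqOn f 1 (Iic t))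
    (hC : C ⊆ q ⁻¹' Iic t) (x : K) : |(f ∘ q - C.indicator 1 : K → ℝ) x| ≤ 1 := by
  classical
  rw [comp_sub_indicator_eq_indicator_compl hf hC, indicator_apply]
  split_ifs
  · obtain ⟨h0, h1⟩ := hf01 (q x)
    exact abs_le.mpr ⟨by simp only [comp_apply]; linarith, h1⟩
  · simp

theorem support_comp_sub_indicator_subset {W : Set L} (hf : EqOn f 1 (Iic t))
    (hfW : EqOn f 0 Wᶜ) (hCl : q ⁻¹' Iio t ⊆ C) (hCu : C ⊆ q ⁻¹' Iic t) :
    support (f ∘ q - C.indicator 1) ⊆ q ⁻¹' (Ici t ∩ W) := fun x hx => by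
  rw [comp_sub_indicator_eq_indicator_compl hf hCu, support_indicator] at hx
  refine ⟨mem_Ici.mpr (le_of_not_gt fun hlt => hx.1 (hCl hlt)), ?_⟩
  by_contra hxW
  exact hx.2 (hfW hxW)

end IndicatorDifference

section SumEstimate

variable {K L α ι : Type*} [TopologicalSpace K] [CompactSpace K]
  [LinearOrder L] [TopologicalSpace L] [OrderTopology L] [MeasurableSpace L] [OpensMeasurableSpace L]
  [TopologicalSpace α]

theorem sum_abs_measure_Iic_sub_le_opNorm (T : C(K, ℝ) →L[ℝ] C₀(α, ℝ)) (a : α)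
    (μ : SignedMeasure L) [μ.totalVariation.OuterRegular] (q : C(K, L))
    (hT : ∀ f : C(L, ℝ), T (f.comp q) a = sint μ f) {p : ι → L} (hp : Injective p)
    {C : ι → Set K} {G : ι → C(K, ℝ)} (hG : ∀ i, ⇑(G i) = (C i).indicator 1)
    (hCl : ∀ i, q ⁻¹' Iio (p i) ⊆ C i) (hCu : ∀ i, C i ⊆ q ⁻¹' Iic (p i)) (s : Finset ι) :
    ∑ i ∈ s, |μ (Iic (p i)) - T (G i) a| ≤ ‖T‖ := by
  refine le_of_forall_pos_le_add fun δ hδ => ?_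
  set ε := δ / (s.card + 1)
  have hε : 0 < ε := by positivity
  -- `W i` separates `Iic (p i)` from the later points of `s`
  set W : ι → Set L := fun i => ⋂ j ∈ s.filter (fun j => p i < p j), Iio (p j)
  have hW : ∀ i, IsOpen (W i) := fun i => isOpen_biInter_finset fun j _ => isOpen_Iio
  have hIicW : ∀ i, Iic (p i) ⊆ W i := fun i x hx =>
    mem_iInter₂.mpr fun j hj => lt_of_le_of_lt hx (Finset.mem_filter.mp hj).2
  choose f hf01 hf1 hf0 hfμ using fun i =>
    exists_continuous_abs_sub_sint_le μ isClosed_Iic (hW i) (hIicW i) hε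
  set h : ι → C(K, ℝ) := fun i => (f i).comp q - G i
  have hh : ∀ i, ⇑(h i) = f i ∘ q - (C i).indicator 1 := fun i => by rw [← hG]; rfl
  have hh1 : ∀ i x, |h i x| ≤ 1 := fun i =>
    hh i ▸ abs_comp_sub_indicator_le_one (hf01 i) (hf1 i) (hCu i)
  have hsupp : ∀ i, support (h i) ⊆ q ⁻¹' (Ici (p i) ∩ W i) := fun i =>
    hh i ▸ support_comp_sub_indicator_subset (hf1 i) (hf0 i) (hCl i) (hCu i)
  have hdisj : (s : Set ι).PairwiseDisjoint fun i => support (h i) := by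
    intro i hi j hj hij
    wlog hlt : p i < p j generalizing i j
    · exact (this hj hi hij.symm ((hp.ne hij).lt_or_gt.resolve_left hlt)).symm
    refine disjoint_left.mpr fun x hxi hxj => ((hsupp j hxj).1).not_gt ?_
    exact mem_iInter₂.mp (hsupp i hxi).2 j (Finset.mem_filter.mpr ⟨hj, hlt⟩)
  have hTh : ∀ i, T (h i) a = sint μ (f i) - T (G i) a := fun i => by
    simp [h, hT]
  calc ∑ i ∈ s, |μ (Iic (p i)) - T (G i) a|
      ≤ ∑ i ∈ s, (|μ (Iic (p i)) - sint μ (f i)| + |T (h i) a|) :=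
        Finset.sum_le_sum fun i _ => by rw [hTh]; exact abs_sub_le _ _ _
    _ = ∑ i ∈ s, |μ (Iic (p i)) - sint μ (f i)| + ∑ i ∈ s, |T (h i) a| := Finset.sum_add_distrib
    _ ≤ s.card * ε + ‖T‖ := by
        gcongr
        · simpa using Finset.sum_le_card_nsmul s _ ε fun i _ => hfμ i
        · exact ZeroAtInftyContinuousMap.sum_abs_apply_le_opNorm T a hh1 hdisj
    _ ≤ ‖T‖ + δ := by
        have : s.card * ε ≤ δ := by
          rw [mul_div_assoc', div_le_iff₀ (by positivity)]; linarith
        linarith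

end SumEstimate

theorem stmt17_general {K L : Type*}
    [LinearOrder K] [TopologicalSpace K] [OrderTopology K] [CompactSpace K]
    [LinearOrder L] [TopologicalSpace L] [OrderTopology L]
    [MeasurableSpace L] [BorelSpace L]
    (hKzd : TopologicalSpace.IsTopologicalBasis {U : Set K | IsClopen U})
    (q : K → L) (hqc : Continuous q) (hqm : Monotone q)
    (μ : ℕ → SignedMeasure L) (hreg : ∀ n, (μ n).totalVariation.Regular)
    -- `T' : C(K) → c₀` is a bounded operator with `T' ∘ q* = T`,
    -- where `T` is the operator associated with `(μₙ)`
    (T' : C(K, ℝ) →L[ℝ] C₀(ℕ, ℝ))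
    (hT' : ∀ (f : C(L, ℝ)) (n : ℕ), T' (f.comp ⟨q, hqc⟩) n = sint (μ n) f) :
    ∃ E : Set L, E.Countable ∧ E ⊆ {t : L | ∃ x y : K, q x = t ∧ q y = t ∧ x ≠ y} ∧
      ∀ t ∈ {t : L | ∃ x y : K, q x = t ∧ q y = t ∧ x ≠ y} \ E,
        Tendsto (fun n => μ n (Set.Iic t)) atTop (𝓝 0) := by
  set Q := {t : L | ∃ x y : K, q x = t ∧ q y = t ∧ x ≠ y}
  have : CompactIccSpace K := ⟨fun {_ _} => isClosed_Icc.isCompact⟩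
  have hQ : ∀ t : Q, ∃ C : Set K, IsClopen C ∧ q ⁻¹' Iio t ⊆ C ∧ C ⊆ q ⁻¹' Iic t := by
    rintro ⟨t, x, y, hx, hy, hxy⟩
    exact exists_isClopen_between_preimage_Iio_Iic hKzd hqm hx hy hxy
  choose C hC hCl hCu using hQ
  set G : Q → C(K, ℝ) := fun t => LocallyConstant.charFn ℝ (hC t)
  set d : ℕ → Q → ℝ := fun n t => |μ n (Iic t) - T' (G t) n|
  have hd : ∀ n, Summable (d n) := fun n =>
    have := hreg n
    summable_of_sum_le (fun _ => abs_nonneg _)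
      (sum_abs_measure_Iic_sub_le_opNorm T' n (μ n) ⟨q, hqc⟩ (fun f => hT' f n)
        Subtype.val_injective (fun t => LocallyConstant.coe_charFn ℝ (hC t)) hCl hCu)
  refine ⟨⋃ n, Subtype.val '' support (d n),
    countable_iUnion fun n => (hd n).countable_support.image _,
    iUnion_subset fun n => by rintro _ ⟨t, -, rfl⟩; exact t.2, ?_⟩
  rintro t ⟨htQ, htE⟩
  have hμG : ∀ n, μ n (Iic t) = T' (G ⟨t, htQ⟩) n := fun n => by
    by_contra hne
    exact htE (mem_iUnion.mpr ⟨n, ⟨t, htQ⟩, abs_ne_zero.mpr (sub_ne_zero.mpr hne), rfl⟩)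
  have hG0 := zero_at_infty (T' (G ⟨t, htQ⟩))
  rw [cocompact_eq_cofinite, Nat.cofinite_eq_atTop] at hG0
  exact hG0.congr fun n => (hμG n).symm

theorem stmt17 {K L : Type*}
    [LinearOrder K] [TopologicalSpace K] [OrderTopology K] [CompactSpace K] [Nonempty K]
    [MeasurableSpace K] [BorelSpace K]
    [LinearOrder L] [TopologicalSpace L] [OrderTopology L] [CompactSpace L] [Nonempty L]
    [MeasurableSpace L] [BorelSpace L]
    (hKzd : TopologicalSpace.IsTopologicalBasis {U : Set K | IsClopen U})
    (q : K → L) (hqc : Continuous q) (hqm : Monotone q) (hqs : Function.Surjective q)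
    (μ : ℕ → SignedMeasure L) (hreg : ∀ n, (μ n).totalVariation.Regular)
    -- `(μₙ)` is weak*-null
    (hnull : ∀ f : C(L, ℝ), Tendsto (fun n => sint (μ n) f) atTop (𝓝 0))
    -- `T' : C(K) → c₀` is a bounded operator with `T' ∘ q* = T`,
    -- where `T` is the operator associated with `(μₙ)`
    (T' : C(K, ℝ) →L[ℝ] C₀(ℕ, ℝ))
    (hT' : ∀ (f : C(L, ℝ)) (n : ℕ), T' (f.comp ⟨q, hqc⟩) n = sint (μ n) f) :
    ∃ E : Set L, E.Countable ∧ E ⊆ {t : L | ∃ x y : K, q x = t ∧ q y = t ∧ x ≠ y} ∧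
      ∀ t ∈ {t : L | ∃ x y : K, q x = t ∧ q y = t ∧ x ≠ y} \ E,
        Tendsto (fun n => μ n (Set.Iic t)) atTop (𝓝 0) :=
  stmt17_general hKzd q hqc hqm μ hreg T' hT'
end
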